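/- Let H be a symmetric positive semidefinite d×d matrix with eigenvalues λ₁ ≥ ⋯ ≥ λ_d, and let n₀, n₁,…,n_k > 0. For any unit vectors u₁,…,u_k, tr[H(n₀I + ∑ᵢ nᵢuᵢuᵢᵀ)⁻¹] ≥ ∑_{j=1}^{d} λ_j/n₀ − (∑_{i=1}^{k} nᵢ/(n₀(n₀+nᵢ))) λ₁, so the risk reduction achievable by any k scalar transmissions is at most λ₁ ∑ᵢ nᵢ/(n₀(n₀+nᵢ)). -/

import Mathlib

/-! With `M = n₀ I + S` and `S = ∑ᵢ nᵢ uᵢuᵢᵀ`, the identity `n₀ M⁻¹ = I - S M⁻¹` gives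
`n₀ tr(H M⁻¹) = tr H - tr(H S M⁻¹)`. Since `S M⁻¹` is positive semidefinite, expanding `H` in its
eigenbasis bounds `tr(H S M⁻¹) ≤ λ₁ tr(S M⁻¹) = λ₁ ∑ᵢ nᵢ uᵢᵀ M⁻¹ uᵢ`. Finally `M` dominates
`n₀ I + nᵢ uᵢuᵢᵀ`, whose inverse has the quadratic form `1 / (n₀ + nᵢ)` at `uᵢ`; for `w = M⁻¹ uᵢ`
and `t = uᵢ ⬝ w` this is the estimate `t = w ⬝ M w ≥ (n₀ + nᵢ) t²`, by Cauchy–Schwarz. -/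

open Matrix Finset

variable {m : Type*}

theorem posDef_smul_one_add [DecidableEq m] {a : ℝ} {S : Matrix m m ℝ} (ha : 0 < a)
    (hS : S.PosSemidef) : (a • (1 : Matrix m m ℝ) + S).PosDef :=
  (PosDef.one.smul ha).add_posSemidef hS

variable [Fintype m]

theorem posSemidef_vecMulVec_self (u : m → ℝ) : (vecMulVec u u).PosSemidef := by
  simpa using posSemidef_vecMulVec_self_star u

theorem trace_vecMulVec_mul {R : Type*} [CommSemiring R] (a b : m → R) (A : Matrix m m R) :
    (vecMulVec a b * A).trace = b ⬝ᵥ (A *ᵥ a) := by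
  rw [vecMulVec_mul, trace_vecMulVec, dotProduct_comm, ← dotProduct_mulVec]

theorem sum_vecMulVec_self_eq_one [DecidableEq m] {R : Type*} [CommRing R] {v : m → m → R}
    (hv : ∀ i j, v i ⬝ᵥ v j = if i = j then 1 else 0) :
    ∑ j, vecMulVec (v j) (v j) = 1 := by
  have hrows : of v * (of v)ᵀ = 1 := by
    ext i j
    simpa [mul_apply, one_apply, dotProduct] using hv i j
  rw [← mul_eq_one_comm.mp hrows]
  ext a b
  simp [mul_apply, Matrix.sum_apply, vecMulVec_apply]

theorem trace_sum_smul_vecMulVec_self {ι : Type*} [Fintype ι] {R : Type*} [CommSemiring R]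
    {v : ι → m → R} (hv : ∀ j, v j ⬝ᵥ v j = 1) (lam : ι → R) :
    (∑ j, lam j • vecMulVec (v j) (v j)).trace = ∑ j, lam j := by
  simp [trace_sum, trace_vecMulVec, hv]

theorem trace_sum_smul_vecMulVec_mul_le [DecidableEq m] {v : m → m → ℝ}
    (hv : ∀ i j, v i ⬝ᵥ v j = if i = j then 1 else 0) {lam : m → ℝ} {c : ℝ}
    (hc : ∀ j, lam j ≤ c) {P : Matrix m m ℝ} (hP : P.PosSemidef) :
    ((∑ j, lam j • vecMulVec (v j) (v j)) * P).trace ≤ c * P.trace := by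
  have hP_trace : P.trace = ∑ j, v j ⬝ᵥ (P *ᵥ v j) := by
    conv_lhs => rw [← one_mul P, ← sum_vecMulVec_self_eq_one hv]
    simp [sum_mul, trace_sum, trace_vecMulVec_mul]
  calc ((∑ j, lam j • vecMulVec (v j) (v j)) * P).trace
      = ∑ j, lam j * (v j ⬝ᵥ (P *ᵥ v j)) := by simp [sum_mul, trace_sum, trace_vecMulVec_mul]
    _ ≤ ∑ j, c * (v j ⬝ᵥ (P *ᵥ v j)) :=
      sum_le_sum fun j _ => mul_le_mul_of_nonneg_right (hc j)
        (by simpa using hP.dotProduct_mulVec_nonneg (v j))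
    _ = c * P.trace := by rw [← mul_sum, hP_trace]

section Resolvent

variable [DecidableEq m] {a : ℝ} {S : Matrix m m ℝ}

theorem smul_inv_smul_one_add (ha : 0 < a) (hS : S.PosSemidef) :
    a • (a • 1 + S)⁻¹ = 1 - S * (a • 1 + S)⁻¹ := by
  have hdet : IsUnit (a • 1 + S).det := (posDef_smul_one_add ha hS).det_pos.ne'.isUnit
  rw [eq_sub_iff_add_eq, ← smul_one_mul a, ← add_mul, (a • 1 + S).mul_nonsing_inv hdet]

theorem posSemidef_mul_inv_smul_one_add (ha : 0 < a) (hS : S.PosSemidef) :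
    (S * (a • 1 + S)⁻¹).PosSemidef := by
  set M := a • 1 + S
  have hdet : IsUnit M.det := (posDef_smul_one_add ha hS).det_pos.ne'.isUnit
  -- `S M⁻¹ = M⁻¹ (M S) M⁻¹`, and `M S = a S + S²` since `S` commutes with `M`.
  have hconj : S * M⁻¹ = M⁻¹ᴴ * (a • S + Sᴴ * S) * M⁻¹ := by
    rw [(posDef_smul_one_add ha hS).posSemidef.inv.isHermitian.eq, hS.isHermitian.eq,
      show a • S + S * S = M * S by rw [add_mul, smul_one_mul], ← Matrix.mul_assoc,
      M.nonsing_inv_mul hdet, one_mul]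
  rw [hconj]
  exact ((hS.smul ha.le).add (posSemidef_conjTranspose_mul_self S)).conjTranspose_mul_mul_same _

end Resolvent

theorem sq_dotProduct_le_mul (u w : m → ℝ) : (u ⬝ᵥ w) ^ 2 ≤ (u ⬝ᵥ u) * (w ⬝ᵥ w) := by
  simpa only [dotProduct, sq] using sum_mul_sq_le_sq_mul_sq univ u w

theorem dotProduct_inv_smul_one_add_smul_vecMulVec_add_le [DecidableEq m] {a c : ℝ}
    (ha : 0 < a) (hc : 0 ≤ c) {u : m → ℝ} (hu : u ⬝ᵥ u = 1) {T : Matrix m m ℝ}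
    (hT : T.PosSemidef) :
    u ⬝ᵥ ((a • 1 + c • vecMulVec u u + T)⁻¹ *ᵥ u) ≤ 1 / (a + c) := by
  set M := a • 1 + c • vecMulVec u u + T
  have hM : M.PosDef := by
    rw [show M = a • 1 + (c • vecMulVec u u + T) from add_assoc _ _ _]
    exact posDef_smul_one_add ha (((posSemidef_vecMulVec_self u).smul hc).add hT)
  set w := M⁻¹ *ᵥ u
  set t := u ⬝ᵥ w
  have hMw : M *ᵥ w = u := by
    rw [mulVec_mulVec, M.mul_nonsing_inv hM.det_pos.ne'.isUnit, one_mulVec]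
  have hquad : t = a * (w ⬝ᵥ w) + c * t ^ 2 + w ⬝ᵥ (T *ᵥ w) := by
    calc t = w ⬝ᵥ (M *ᵥ w) := by rw [hMw, dotProduct_comm]
      _ = _ := by
        simp only [M, add_mulVec, smul_mulVec, one_mulVec, vecMulVec_mulVec, dotProduct_add,
          dotProduct_smul, smul_eq_mul]
        simp [t, dotProduct_comm w u, sq]
  have hTw : 0 ≤ w ⬝ᵥ (T *ᵥ w) := by simpa using hT.dotProduct_mulVec_nonneg w
  have hCS : t ^ 2 ≤ w ⬝ᵥ w := by simpa [hu] using sq_dotProduct_le_mul u w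
  have hsq : (a + c) * t ^ 2 ≤ t := by linarith [mul_le_mul_of_nonneg_left hCS ha.le]
  rw [le_div_iff₀ (by linarith)]
  nlinarith [sq_nonneg t]

theorem trace_sum_smul_vecMulVec_mul_inv_le [DecidableEq m] {ι : Type*} [Fintype ι] {a : ℝ}
    (ha : 0 < a) {c : ι → ℝ} (hc : ∀ i, 0 ≤ c i) {u : ι → m → ℝ} (hu : ∀ i, u i ⬝ᵥ u i = 1) :
    ((∑ i, c i • vecMulVec (u i) (u i)) *
        (a • 1 + ∑ i, c i • vecMulVec (u i) (u i))⁻¹).trace ≤ ∑ i, c i / (a + c i) := by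
  classical
  rw [sum_mul, trace_sum]
  refine sum_le_sum fun i _ => ?_
  have hrest : (∑ j ∈ univ.erase i, c j • vecMulVec (u j) (u j)).PosSemidef :=
    posSemidef_sum _ fun j _ => (posSemidef_vecMulVec_self (u j)).smul (hc j)
  rw [smul_mul_assoc, trace_smul, trace_vecMulVec_mul, smul_eq_mul, div_eq_mul_one_div,
    ← add_sum_erase _ _ (mem_univ i), ← add_assoc]
  exact mul_le_mul_of_nonneg_left
    (dotProduct_inv_smul_one_add_smul_vecMulVec_add_le ha (hc i) (hu i) hrest) (hc i)

/-- Upper bound on achievable risk reduction: for any unit vectors `u₁,…,u_k`,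
`tr[H(n₀I + ∑ᵢ nᵢuᵢuᵢᵀ)⁻¹] ≥ ∑ⱼ λⱼ/n₀ − λ₁ ∑ᵢ nᵢ/(n₀(n₀+nᵢ))`. -/
theorem stmt_19 {d k : ℕ} (hd : 0 < d) (lam : Fin d → ℝ) (hmono : Antitone lam)
    (hnonneg : ∀ j, 0 ≤ lam j)
    (v : Fin d → Fin d → ℝ)
    (hortho : ∀ i j, v i ⬝ᵥ v j = if i = j then (1 : ℝ) else 0)
    (H : Matrix (Fin d) (Fin d) ℝ)
    (hH : H = ∑ j, lam j • vecMulVec (v j) (v j))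
    (n₀ : ℝ) (hn₀ : 0 < n₀) (n : Fin k → ℝ) (hn : ∀ i, 0 < n i)
    (u : Fin k → Fin d → ℝ) (hunit : ∀ i, u i ⬝ᵥ u i = 1) :
    (∑ j : Fin d, lam j / n₀) - (∑ i, n i / (n₀ * (n₀ + n i))) * lam ⟨0, hd⟩
      ≤ (H * (n₀ • (1 : Matrix (Fin d) (Fin d) ℝ)
          + ∑ i, n i • vecMulVec (u i) (u i))⁻¹).trace := by
  set S := ∑ i, n i • vecMulVec (u i) (u i)
  have hS : S.PosSemidef :=
    posSemidef_sum _ fun i _ => (posSemidef_vecMulVec_self (u i)).smul (hn i).le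
  have hsplit :
      n₀ * (H * (n₀ • 1 + S)⁻¹).trace = H.trace - (H * (S * (n₀ • 1 + S)⁻¹)).trace := by
    rw [← smul_eq_mul, ← trace_smul, ← mul_smul_comm, smul_inv_smul_one_add hn₀ hS, mul_sub,
      mul_one, trace_sub]
  have htrace : H.trace = ∑ j, lam j := by
    rw [hH, trace_sum_smul_vecMulVec_self (fun j => by simpa using hortho j j)]
  have hspectral :
      (H * (S * (n₀ • 1 + S)⁻¹)).trace ≤ lam ⟨0, hd⟩ * (S * (n₀ • 1 + S)⁻¹).trace :=
    hH ▸ trace_sum_smul_vecMulVec_mul_le hortho (fun j => hmono (Nat.zero_le j))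
      (posSemidef_mul_inv_smul_one_add hn₀ hS)
  have hrank_one :
      lam ⟨0, hd⟩ * (S * (n₀ • 1 + S)⁻¹).trace ≤ lam ⟨0, hd⟩ * ∑ i, n i / (n₀ + n i) :=
    mul_le_mul_of_nonneg_left
      (trace_sum_smul_vecMulVec_mul_inv_le hn₀ (fun i => (hn i).le) hunit) (hnonneg _)
  have hlhs : (∑ j, lam j / n₀) - (∑ i, n i / (n₀ * (n₀ + n i))) * lam ⟨0, hd⟩
      = ((∑ j, lam j) - lam ⟨0, hd⟩ * ∑ i, n i / (n₀ + n i)) / n₀ := by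
    simp only [div_mul_eq_div_div_swap, ← sum_div]
    ring
  rw [hlhs, div_le_iff₀ hn₀]
  linarith
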